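/- arXiv:2307.12055 — 2 statements merged into one kernel-verified Lean document; each statement's English description precedes it below -/
import Mathlib

section
/- Let (X, μ) be a measure space and let α : X → ℝ be measurable with 0 < α_min ≤ α(x) ≤ α_max for μ-a.e. x. Let N : L²(μ; ℝ) → L²(μ; ℝ) be a continuous linear operator with ⟨N v, v⟩ ≥ c₀ ‖v‖² for all v ∈ L², where c₀ > 0. Then for every g ∈ L²(μ; ℝ) there exists a unique u ∈ L²(μ; ℝ) satisfying u + N(α·u) = g, and it obeys ‖u‖ ≤ (α_max / (α_min (1 + c₀ α_min))) ‖g‖. -/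
open MeasureTheory
open scoped InnerProductSpace ENNReal

/-!
Writing `w = α u`, the equation `u + N (α u) = g` becomes `α⁻¹ w + N w = g`. The operator
`w ↦ α⁻¹ w + N w` is the sum of a positive multiplication operator and a coercive one, hence
coercive, so Lax–Milgram makes it bijective; as multiplication by `α` is bijective on `L²`, so
is `u ↦ u + N (α u)`. For the bound, pair the equation with `w`: as `⟪u, w⟫ ≥ αmin ‖u‖²`
and `αmin ‖u‖ ≤ ‖w‖ ≤ αmax ‖u‖`, coercivity of `N` gives
`αmin (1 + c₀ αmin) ‖u‖² ≤ ⟪u, w⟫ + ⟪N w, w⟫ = ⟪g, w⟫ ≤ αmax ‖g‖ ‖u‖`.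
-/

theorem ContinuousLinearMap.bijective_of_coercive {V : Type*} [NormedAddCommGroup V]
    [InnerProductSpace ℝ V] [CompleteSpace V] (A : V →L[ℝ] V) {c : ℝ} (hc : 0 < c)
    (hA : ∀ v, c * ‖v‖ ^ 2 ≤ ⟪A v, v⟫_ℝ) : Function.Bijective A := by
  let B : V →L[ℝ] V →L[ℝ] ℝ := (innerSL ℝ).comp A
  have hB : IsCoercive B := ⟨c, hc, fun v => by simpa [B, pow_two, mul_assoc] using hA v⟩
  have hBA : (hB.continuousLinearEquivOfBilin : V → V) = A :=
    funext fun v => (hB.unique_continuousLinearEquivOfBilin fun _ => rfl).symm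
  exact hBA ▸ hB.continuousLinearEquivOfBilin.bijective

namespace MeasureTheory

variable {X : Type*} [MeasurableSpace X] {μ : Measure X}

theorem Lp.exists_clm_coeFn_eq_mul (p : ℝ≥0∞) [Fact (1 ≤ p)] {β : X → ℝ} (hβ : MemLp β ∞ μ) :
    ∃ T : Lp ℝ p μ →L[ℝ] Lp ℝ p μ, ∀ u, ⇑(T u) =ᵐ[μ] fun x => β x * u x :=
  ⟨(ContinuousLinearMap.mul ℝ ℝ).holderL μ ∞ p p hβ.toLp, fun u =>
    ((ContinuousLinearMap.mul ℝ ℝ).coeFn_holder _ _).trans <| by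
      filter_upwards [hβ.coeFn_toLp] with x hx
      simp [hx]⟩

theorem L2.inner_nonneg_of_ae {f u : Lp ℝ 2 μ} (h : ∀ᵐ x ∂μ, 0 ≤ f x * u x) :
    0 ≤ ⟪f, u⟫_ℝ := by
  rw [L2.inner_def]
  exact integral_nonneg_of_ae <| h.mono fun x hx => by simpa [mul_comm] using hx

theorem L2.mul_norm_sq_le_inner_of_coeFn_eq_mul {f u : Lp ℝ 2 μ} {β : X → ℝ} {c : ℝ}
    (hf : ⇑f =ᵐ[μ] fun x => β x * u x) (hβ : ∀ᵐ x ∂μ, c ≤ β x) :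
    c * ‖u‖ ^ 2 ≤ ⟪f, u⟫_ℝ := by
  have h : 0 ≤ ⟪f - c • u, u⟫_ℝ := L2.inner_nonneg_of_ae <| by
    filter_upwards [Lp.coeFn_sub f (c • u), Lp.coeFn_smul c u, hf, hβ] with x hsub hsmul hfx hβx
    rw [hsub, Pi.sub_apply, hsmul, Pi.smul_apply, hfx, smul_eq_mul, ← sub_mul, mul_assoc]
    exact mul_nonneg (sub_nonneg.mpr hβx) (mul_self_nonneg _)
  rw [inner_sub_left, real_inner_smul_left, real_inner_self_eq_norm_sq] at h
  linarith

variable {α : X → ℝ} {M : Lp ℝ 2 μ → Lp ℝ 2 μ} {N : Lp ℝ 2 μ →L[ℝ] Lp ℝ 2 μ} {a c : ℝ}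

theorem L2.bijective_add_comp_mul_of_coercive (hα : Measurable α) (ha : 0 < a)
    (hαa : ∀ᵐ x ∂μ, a ≤ α x) (hM : ∀ u, ⇑(M u) =ᵐ[μ] fun x => α x * u x) (hc : 0 < c)
    (hN : ∀ v, c * ‖v‖ ^ 2 ≤ ⟪N v, v⟫_ℝ) :
    Function.Bijective fun u => u + N (M u) := by
  have hαpos : ∀ᵐ x ∂μ, 0 < α x := hαa.mono fun x hx => ha.trans_le hx
  have hαinv : MemLp (fun x => (α x)⁻¹) ∞ μ :=
    memLp_top_of_bound hα.inv.aestronglyMeasurable a⁻¹ <| hαa.mono fun x hx => by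
      rw [norm_inv, Real.norm_of_nonneg (ha.le.trans hx)]
      exact inv_anti₀ ha hx
  obtain ⟨D, hD⟩ := Lp.exists_clm_coeFn_eq_mul 2 hαinv
  have hDM : ∀ u, D (M u) = u := fun u => Lp.ext <| by
    filter_upwards [hD (M u), hM u, hαpos] with x hDx hMx hx
    rw [hDx, hMx, inv_mul_cancel_left₀ hx.ne']
  have hMD : ∀ w, M (D w) = w := fun w => Lp.ext <| by
    filter_upwards [hM (D w), hD w, hαpos] with x hMx hDx hx
    rw [hMx, hDx, mul_inv_cancel_left₀ hx.ne']
  have hDN : ∀ w, c * ‖w‖ ^ 2 ≤ ⟪(D + N) w, w⟫_ℝ := fun w => by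
    have hDw : 0 * ‖w‖ ^ 2 ≤ ⟪D w, w⟫_ℝ :=
      L2.mul_norm_sq_le_inner_of_coeFn_eq_mul (hD w) (hαpos.mono fun x hx => (inv_pos.mpr hx).le)
    rw [_root_.add_apply, inner_add_left]
    linarith [hN w]
  have hcomp : (fun u => u + N (M u)) = (D + N) ∘ M := funext fun u => by
    simp [hDM]
  rw [hcomp]
  exact ((D + N).bijective_of_coercive hc hDN).comp
    (Function.bijective_iff_has_inverse.mpr ⟨D, hDM, hMD⟩)

theorem L2.norm_le_of_add_comp_mul_eq {b : ℝ} (ha : 0 < a)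
    (hαab : ∀ᵐ x ∂μ, a ≤ α x ∧ α x ≤ b) (hM : ∀ u, ⇑(M u) =ᵐ[μ] fun x => α x * u x)
    (hc : 0 ≤ c) (hN : ∀ v, c * ‖v‖ ^ 2 ≤ ⟪N v, v⟫_ℝ) {u g : Lp ℝ 2 μ}
    (hu : u + N (M u) = g) :
    ‖u‖ ≤ b / (a * (1 + c * a)) * ‖g‖ := by
  rcases eq_or_ne u 0 with rfl | hu0
  · have hM0 : M 0 = 0 := Lp.ext <| by
      filter_upwards [hM 0, Lp.coeFn_zero ℝ 2 μ] with x hMx h0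
      rw [hMx, h0, Pi.zero_apply, mul_zero]
    simp [← hu, hM0]
  have hu_pos : 0 < ‖u‖ := norm_pos_iff.mpr hu0
  set w := M u
  have hwu : a * ‖u‖ ^ 2 ≤ ⟪w, u⟫_ℝ :=
    L2.mul_norm_sq_le_inner_of_coeFn_eq_mul (hM u) (hαab.mono fun x hx => hx.1)
  have hw_le : ‖w‖ ≤ b * ‖u‖ := Lp.norm_le_mul_norm_of_ae_le_mul <| by
    filter_upwards [hM u, hαab] with x hMx hx
    rw [hMx, norm_mul, Real.norm_of_nonneg (ha.le.trans hx.1)]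
    exact mul_le_mul_of_nonneg_right hx.2 (norm_nonneg _)
  have hw_ge : a * ‖u‖ ≤ ‖w‖ := le_of_mul_le_mul_right (by
    rw [mul_assoc, ← pow_two]; exact hwu.trans (real_inner_le_norm w u)) hu_pos
  have hg : ⟪w, u⟫_ℝ + ⟪N w, w⟫_ℝ = ⟪g, w⟫_ℝ := by
    rw [← hu, inner_add_left, real_inner_comm]
  rw [div_mul_eq_mul_div, le_div_iff₀ (by positivity)]
  refine le_of_mul_le_mul_right ?_ hu_pos
  calc ‖u‖ * (a * (1 + c * a)) * ‖u‖ = a * ‖u‖ ^ 2 + c * (a * ‖u‖) ^ 2 := by ring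
    _ ≤ ⟪w, u⟫_ℝ + c * ‖w‖ ^ 2 := by gcongr
    _ ≤ ⟪w, u⟫_ℝ + ⟪N w, w⟫_ℝ := by gcongr; exact hN w
    _ = ⟪g, w⟫_ℝ := hg
    _ ≤ ‖g‖ * ‖w‖ := real_inner_le_norm g w
    _ ≤ ‖g‖ * (b * ‖u‖) := by gcongr
    _ = b * ‖g‖ * ‖u‖ := by ring

end MeasureTheory

/-- Unique solvability (with quantitative bound) of the integral equation
u + N(α u) = g in L², established in Subsection 5.1 of the paper via Lax–Milgram. -/
theorem stmt_4 {X : Type*} [MeasurableSpace X] (μ : Measure X)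
    (α : X → ℝ) (hαmeas : Measurable α)
    (αmin αmax : ℝ) (hαmin : 0 < αmin)
    (hbdd : ∀ᵐ x ∂μ, αmin ≤ α x ∧ α x ≤ αmax)
    (N : Lp ℝ 2 μ →L[ℝ] Lp ℝ 2 μ) (c₀ : ℝ) (hc₀ : 0 < c₀)
    (hN : ∀ v : Lp ℝ 2 μ, c₀ * ‖v‖ ^ 2 ≤ ⟪N v, v⟫_ℝ)
    (M : Lp ℝ 2 μ → Lp ℝ 2 μ)
    (hM : ∀ u : Lp ℝ 2 μ, ⇑(M u) =ᵐ[μ] fun x => α x * u x)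
    (g : Lp ℝ 2 μ) :
    (∃! u : Lp ℝ 2 μ, u + N (M u) = g) ∧
    ∀ u : Lp ℝ 2 μ, u + N (M u) = g →
      ‖u‖ ≤ (αmax / (αmin * (1 + c₀ * αmin))) * ‖g‖ :=
  ⟨(L2.bijective_add_comp_mul_of_coercive hαmeas hαmin (hbdd.mono fun _ hx => hx.1) hM hc₀
      hN).existsUnique g,
    fun _ hu => L2.norm_le_of_add_comp_mul_eq hαmin hbdd hM hc₀.le hN hu⟩
end

section
/- Let H be a real Hilbert space with a Hilbert (orthonormal) basis (e_n)_{n ∈ ℕ}, and let T : H → H be a continuous linear operator with T e_n = λ_n e_n for real numbers λ_n. Let c ∈ ℝ, n₀ ∈ ℕ and δ > 0 be such that c ≠ λ_{n₀} and |c − λ_n| ≥ δ for all n ≠ n₀. If u, v ∈ H satisfy c·u − T u = v, then | ⟨u, v⟩ − ⟨v, e_{n₀}⟩² / (c − λ_{n₀}) | ≤ ‖v‖² / δ. -/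
open scoped InnerProductSpace

/-!
Writing `a n = ⟪e_n, u⟫`, diagonality of `T` gives `⟪e_n, v⟫ = (c - λ_n) a n`, so Parseval turns
`⟪u, v⟫` into `∑ (c - λ_n) (a n)²` and `‖v‖²` into `∑ (c - λ_n)² (a n)²`. The `n₀`-th term of the
first series is `⟪v, e_{n₀}⟫² / (c - λ_{n₀})`, and every other term is bounded in absolute value by
the corresponding term of the second series divided by `δ`, because `δ ≤ |c - λ_n|`.
-/

theorem HilbertBasis.inner_apply_of_apply_eq_smul {ι 𝕜 H : Type*} [RCLike 𝕜]
    [NormedAddCommGroup H] [InnerProductSpace 𝕜 H] (b : HilbertBasis ι 𝕜 H) (T : H →L[𝕜] H)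
    (lam : ι → 𝕜) (hT : ∀ i, T (b i) = lam i • b i) (n : ι) (u : H) :
    ⟪b n, T u⟫_𝕜 = lam n * ⟪b n, u⟫_𝕜 := by
  classical
  suffices (innerSL 𝕜 (b n)).comp T = lam n • innerSL 𝕜 (b n) from
    DFunLike.congr_fun this u
  refine ContinuousLinearMap.ext_on
    (Submodule.dense_iff_topologicalClosure_eq_top.mpr b.dense_span) ?_
  rintro _ ⟨i, rfl⟩
  by_cases hi : n = i
  · subst hi
    simp [hT]
  · simp [hT, b.orthonormal.inner_eq_zero hi]

theorem abs_sub_le_of_hasSum_of_abs_le {ι : Type*} {f g : ι → ℝ} {s t : ℝ} (hf : HasSum f s)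
    (hg : HasSum g t) (i : ι) (hgi : 0 ≤ g i) (hfg : ∀ j, j ≠ i → |f j| ≤ g j) :
    |s - f i| ≤ t := by
  classical
  have hupdate : HasSum (Function.update f i 0) (s - f i) := by
    simpa [sub_eq_neg_add] using hf.update i 0
  have hbound : ∀ j, |Function.update f i 0 j| ≤ g j := by
    intro j
    by_cases hj : j = i
    · subst hj
      simpa using hgi
    · simpa [Function.update_of_ne hj] using hfg j hj
  rw [abs_le]
  exact ⟨hasSum_le (fun j => neg_le_of_abs_le (hbound j)) hg.neg hupdate,
    hasSum_le (fun j => le_of_abs_le (hbound j)) hupdate hg⟩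

theorem abs_mul_sq_le_sq_div {x a δ : ℝ} (hδ : 0 < δ) (hx : δ ≤ |x|) :
    |x * a ^ 2| ≤ (x * a) ^ 2 / δ := by
  rw [le_div_iff₀ hδ, abs_mul, abs_of_nonneg (sq_nonneg a), mul_pow, ← sq_abs x]
  nlinarith [mul_le_mul_of_nonneg_left hx (mul_nonneg (abs_nonneg x) (sq_nonneg a))]

theorem stmt_5_general {H : Type*} [NormedAddCommGroup H] [InnerProductSpace ℝ H]
    (b : HilbertBasis ℕ ℝ H) (T : H →L[ℝ] H) (lam : ℕ → ℝ)
    (hT : ∀ n, T (b n) = lam n • b n)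
    (c : ℝ) (n₀ : ℕ) (δ : ℝ) (hδ : 0 < δ)
    (hc : c ≠ lam n₀) (hsep : ∀ n, n ≠ n₀ → δ ≤ |c - lam n|)
    (u v : H) (huv : c • u - T u = v) :
    |⟪u, v⟫_ℝ - ⟪v, b n₀⟫_ℝ ^ 2 / (c - lam n₀)| ≤ ‖v‖ ^ 2 / δ := by
  have hv : ∀ n, ⟪b n, v⟫_ℝ = (c - lam n) * ⟪b n, u⟫_ℝ := fun n => by
    rw [← huv, inner_sub_right, real_inner_smul_right,
      b.inner_apply_of_apply_eq_smul T lam hT, sub_mul]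
  have hsum_uv : HasSum (fun n => (c - lam n) * ⟪b n, u⟫_ℝ ^ 2) ⟪u, v⟫_ℝ := by
    have h : HasSum (fun n => ⟪u, b n⟫_ℝ * ⟪b n, v⟫_ℝ) ⟪u, v⟫_ℝ := b.hasSum_inner_mul_inner u v
    convert h using 2 with n
    rw [real_inner_comm (b n) u, hv]
    ring
  have hsum_vv : HasSum (fun n => ((c - lam n) * ⟪b n, u⟫_ℝ) ^ 2) (‖v‖ ^ 2) := by
    have h : HasSum (fun n => ⟪v, b n⟫_ℝ * ⟪b n, v⟫_ℝ) ⟪v, v⟫_ℝ := b.hasSum_inner_mul_inner v v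
    rw [real_inner_self_eq_norm_sq] at h
    convert h using 2 with n
    rw [real_inner_comm (b n) v, hv, sq]
  have hv₀ : ⟪v, b n₀⟫_ℝ ^ 2 / (c - lam n₀) = (c - lam n₀) * ⟪b n₀, u⟫_ℝ ^ 2 := by
    rw [real_inner_comm, hv]
    field_simp [sub_ne_zero.mpr hc]
  rw [hv₀]
  exact abs_sub_le_of_hasSum_of_abs_le hsum_uv (hsum_vv.div_const δ) n₀ (by positivity)
    fun n hn => abs_mul_sq_le_sq_div hδ (hsep n hn)

/-- Abstract spectral computation underlying Lemma 4.6 of the paper: if T is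
diagonal in a Hilbert basis with eigenvalues λ_n and c•u − Tu = v, then ⟨u, v⟩
equals ⟨v, e_{n₀}⟩²/(c − λ_{n₀}) up to an error of size ‖v‖²/δ, provided c is
δ-separated from all λ_n with n ≠ n₀. -/
theorem stmt_5 {H : Type*} [NormedAddCommGroup H] [InnerProductSpace ℝ H]
    [CompleteSpace H]
    (b : HilbertBasis ℕ ℝ H) (T : H →L[ℝ] H) (lam : ℕ → ℝ)
    (hT : ∀ n, T (b n) = lam n • b n)
    (c : ℝ) (n₀ : ℕ) (δ : ℝ) (hδ : 0 < δ)
    (hc : c ≠ lam n₀) (hsep : ∀ n, n ≠ n₀ → δ ≤ |c - lam n|)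
    (u v : H) (huv : c • u - T u = v) :
    |⟪u, v⟫_ℝ - ⟪v, b n₀⟫_ℝ ^ 2 / (c - lam n₀)| ≤ ‖v‖ ^ 2 / δ :=
  stmt_5_general b T lam hT c n₀ δ hδ hc hsep u v huv
end
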